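/- (Composition law.) For unitary matrices U₁ and U₂ on ℂ^d, let G₁, G₂ and G denote the discrete Wigner propagators associated with U₁, U₂ and the product U₂·U₁, respectively. Then for all μ, μ'' ∈ ZMod d × ZMod d, G(μ, μ'') = Σ_{μ' ∈ ZMod d × ZMod d} G₂(μ, μ') · G₁(μ', μ''). -/

import Mathlib

open Matrix Complex

noncomputable section

/-- `ω = exp(2πi/d)`, a primitive `d`-th root of unity. -/
def omega (d : ℕ) : ℂ := Complex.exp (2 * Real.pi * Complex.I / d)

/-- Powers of `ω` with exponent valued in `ZMod d`, evaluated via the canonical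
integer representative (well-defined since `ω ^ d = 1`). -/
def wpow (d : ℕ) (x : ZMod d) : ℂ := omega d ^ x.val

/-- The clock matrix `Z`, acting as `Z e_n = ω^n e_n`. -/
def clockZ (d : ℕ) : Matrix (ZMod d) (ZMod d) ℂ :=
  Matrix.diagonal (fun n => wpow d n)

/-- The shift matrix `X`, acting as `X e_n = e_{n+1}`. -/
def shiftX (d : ℕ) : Matrix (ZMod d) (ZMod d) ℂ :=
  Matrix.of (fun i j => if i = j + 1 then 1 else 0)

/-- The displacement operator `D(k,j) = ω^{-2⁻¹ k j} Z^k X^j`. -/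
def Dop (d : ℕ) [NeZero d] (k j : ZMod d) : Matrix (ZMod d) (ZMod d) ℂ :=
  wpow d (-(2⁻¹ * k * j)) • (clockZ d ^ k.val * shiftX d ^ j.val)

/-- The Weyl symbol of a matrix `A`: `Ã(k,j) = Tr(A · D(k,j))`. -/
def weylSymbol (d : ℕ) [NeZero d] (A : Matrix (ZMod d) (ZMod d) ℂ) (k j : ZMod d) : ℂ :=
  Matrix.trace (A * Dop d k j)

/-- The phase-space symbol of `B`:
`B_W(m,n) = (1/d) Σ_{k,j} Tr(B·D(k,j)) ω^{jn−km}`. -/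
def psSymbol (d : ℕ) [NeZero d] (B : Matrix (ZMod d) (ZMod d) ℂ) (m n : ZMod d) : ℂ :=
  (1 / (d : ℂ)) * ∑ k : ZMod d, ∑ j : ZMod d,
    weylSymbol d B k j * wpow d (j * n - k * m)

/-- The discrete Wigner propagator of a unitary `U`:
`G_W((m',n'),(m,n)) = (1/d²) Σ_{m̃,ñ} ω^{−2[m̃(n'−n) − ñ(m'−m)]}
  U_W(m+m̃, n+ñ) · conj(U_W(m'−m̃, n'−ñ))`. -/
def propG (d : ℕ) [NeZero d] (U : Matrix (ZMod d) (ZMod d) ℂ)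
    (μ' μ : ZMod d × ZMod d) : ℂ :=
  (1 / (d : ℂ) ^ 2) * ∑ mt : ZMod d, ∑ nt : ZMod d,
    wpow d (-(2 * (mt * (μ'.2 - μ.2) - nt * (μ'.1 - μ.1)))) *
      psSymbol d U (μ.1 + mt) (μ.2 + nt) *
      (starRingEnd ℂ) (psSymbol d U (μ'.1 - mt) (μ'.2 - nt))

variable (d : ℕ) [NeZero d]

lemma omega_prim : IsPrimitiveRoot (omega d) d :=
  Complex.isPrimitiveRoot_exp d (NeZero.ne d)

lemma omega_pow_d : omega d ^ d = 1 := (omega_prim d).pow_eq_one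

lemma wpow_natCast (n : ℕ) : wpow d (n : ZMod d) = omega d ^ n := by
  rw [wpow, ZMod.val_natCast]
  conv_rhs => rw [← Nat.div_add_mod n d, pow_add, pow_mul, omega_pow_d, one_pow, one_mul]

lemma wpow_zero : wpow d 0 = 1 := by
  simpa using wpow_natCast d 0

lemma wpow_add (x y : ZMod d) : wpow d (x + y) = wpow d x * wpow d y := by
  have h : ((x.val + y.val : ℕ) : ZMod d) = x + y := by
    push_cast [ZMod.natCast_val, ZMod.cast_id]; ring
  rw [← h, wpow_natCast, pow_add, wpow, wpow]

lemma wpow_neg_mul (x : ZMod d) : wpow d (-x) * wpow d x = 1 := by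
  rw [← wpow_add, neg_add_cancel, wpow_zero]

lemma conj_wpow (x : ZMod d) : (starRingEnd ℂ) (wpow d x) = wpow d (-x) := by
  have habs : ‖wpow d x‖ = 1 := by
    rw [wpow]
    rw [norm_pow]
    have : ‖omega d‖ = 1 := by
      rw [omega]
      rw [show (2 * ↑Real.pi * Complex.I / ↑d) = ((2 * Real.pi / d : ℝ) : ℂ) * Complex.I by push_cast; ring]
      exact Complex.norm_exp_ofReal_mul_I _
    rw [this, one_pow]
  have h1 : wpow d x * (starRingEnd ℂ) (wpow d x) = 1 := by
    rw [Complex.mul_conj]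
    norm_cast
    rw [← Complex.sq_norm, habs]; norm_num
  have h2 := wpow_neg_mul d x
  have hne : wpow d x ≠ 0 := by
    intro h; rw [h, mul_zero] at h2; exact one_ne_zero h2.symm
  have := h1.trans h2.symm
  rw [mul_comm (wpow d (-x)) (wpow d x)] at this
  exact mul_left_cancel₀ hne this

lemma wpow_mul_val (x k : ZMod d) : wpow d (x * k) = (wpow d x) ^ k.val := by
  have h : ((x.val * k.val : ℕ) : ZMod d) = x * k := by
    push_cast [ZMod.natCast_val, ZMod.cast_id]; ring
  rw [← h, wpow_natCast, pow_mul, wpow]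

lemma wpow_ne_one {x : ZMod d} (hx : x ≠ 0) : wpow d x ≠ 1 := by
  refine (omega_prim d).pow_ne_one_of_pos_of_lt ?_ (ZMod.val_lt x)
  exact (Nat.pos_of_ne_zero fun h => hx (by rwa [← ZMod.val_eq_zero])).ne'

lemma sum_wpow (x : ZMod d) :
    ∑ k : ZMod d, wpow d (x * k) = if x = 0 then (d : ℂ) else 0 := by
  by_cases hx : x = 0
  · simp [hx, wpow_zero]
  · simp only [hx, if_false]
    have key : wpow d x * ∑ k : ZMod d, wpow d (x * k) = ∑ k : ZMod d, wpow d (x * k) := by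
      rw [Finset.mul_sum]
      rw [← Equiv.sum_comp (Equiv.addRight (1 : ZMod d)) (fun k => wpow d (x * k))]
      refine Finset.sum_congr rfl fun k _ => ?_
      simp only [Equiv.coe_addRight]
      rw [← wpow_add]; ring_nf
    have := sub_eq_zero.mpr key
    rw [← sub_one_mul] at this
    rcases mul_eq_zero.mp this with h | h
    · exact absurd (sub_eq_zero.mp h) (wpow_ne_one d hx)
    · exact h

lemma shiftX_pow_apply (n : ℕ) (a b : ZMod d) :
    (shiftX d ^ n) a b = if a = b + (n : ZMod d) then 1 else 0 := by
  induction n generalizing b with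
  | zero => simp [Matrix.one_apply]
  | succ n ih =>
    rw [pow_succ, Matrix.mul_apply]
    simp only [shiftX, Matrix.of_apply, mul_ite, mul_one, mul_zero]
    simp only [Finset.sum_ite_eq', Finset.mem_univ, if_true]
    rw [show ((of fun i j => if i = j + 1 then (1:ℂ) else 0) ^ n) a (b+1) = (shiftX d ^ n) a (b+1) from rfl, ih (b+1)]
    congr 1
    have : b + 1 + (n : ZMod d) = b + ((n + 1 : ℕ) : ZMod d) := by push_cast; ring
    rw [this]

lemma Dop_apply (k j a b : ZMod d) :
    Dop d k j a b = wpow d (k * a - 2⁻¹ * k * j) * (if a = b + j then 1 else 0) := by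
  rw [Dop, Matrix.smul_apply, clockZ, Matrix.diagonal_pow, Matrix.diagonal_mul]
  rw [shiftX_pow_apply]
  have hj : ((j.val : ℕ) : ZMod d) = j := by
    rw [ZMod.natCast_val, ZMod.cast_id]
  simp only [Pi.pow_apply]
  rw [hj, ← wpow_mul_val, smul_eq_mul, ← mul_assoc, ← wpow_add]
  congr 2
  ring

lemma weylSymbol_eq (A : Matrix (ZMod d) (ZMod d) ℂ) (k j : ZMod d) :
    weylSymbol d A k j = ∑ a : ZMod d, A a (a + j) * wpow d (k * (a + j) - 2⁻¹ * k * j) := by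
  rw [weylSymbol, Matrix.trace]
  simp only [Matrix.diag_apply, Matrix.mul_apply, Dop_apply]
  refine Finset.sum_congr rfl fun a _ => ?_
  simp only [mul_ite, mul_one, mul_zero, Finset.sum_ite_eq', Finset.mem_univ, if_true]

lemma psSymbol_eq (h2 : (2 : ZMod d) * 2⁻¹ = 1)
    (B : Matrix (ZMod d) (ZMod d) ℂ) (m n : ZMod d) :
    psSymbol d B m n = ∑ j : ZMod d, B (m - 2⁻¹ * j) (m + 2⁻¹ * j) * wpow d (j * n) := by
  have hd0 : (d : ℂ) ≠ 0 := Nat.cast_ne_zero.mpr (NeZero.ne d)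
  rw [psSymbol, Finset.sum_comm]
  have step : ∀ j : ZMod d, ∑ k : ZMod d, weylSymbol d B k j * wpow d (j * n - k * m)
      = (d : ℂ) * (B (m - 2⁻¹ * j) (m + 2⁻¹ * j) * wpow d (j * n)) := by
    intro j
    simp only [weylSymbol_eq, Finset.sum_mul]
    rw [Finset.sum_comm]
    have inner : ∀ a : ZMod d,
        (∑ k : ZMod d, B a (a + j) * wpow d (k * (a + j) - 2⁻¹ * k * j) * wpow d (j * n - k * m))
        = B a (a + j) * wpow d (j * n) * (if a + 2⁻¹ * j - m = 0 then (d : ℂ) else 0) := by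
      intro a
      rw [← sum_wpow d (a + 2⁻¹ * j - m), Finset.mul_sum]
      refine Finset.sum_congr rfl fun k _ => ?_
      calc B a (a + j) * wpow d (k * (a + j) - 2⁻¹ * k * j) * wpow d (j * n - k * m)
          = B a (a + j) * wpow d (k * (a + j) - 2⁻¹ * k * j + (j * n - k * m)) := by
            rw [wpow_add]; ring
        _ = B a (a + j) * wpow d (j * n + (a + 2⁻¹ * j - m) * k) := by
            congr 2
            linear_combination (-(k * j)) * h2
        _ = B a (a + j) * wpow d (j * n) * wpow d ((a + 2⁻¹ * j - m) * k) := by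
            rw [wpow_add]; ring
    simp only [inner]
    simp only [mul_ite, mul_zero, sub_eq_zero, ← eq_sub_iff_add_eq]
    rw [Finset.sum_ite_eq' Finset.univ (m - 2⁻¹ * j)
      (fun a => B a (a + j) * wpow d (j * n) * (d : ℂ))]
    simp only [Finset.mem_univ, if_true]
    rw [show m - 2⁻¹ * j + j = m + 2⁻¹ * j by linear_combination (-j) * h2]
    ring
  simp only [step, ← Finset.mul_sum]
  rw [← mul_assoc, one_div, inv_mul_cancel₀ hd0, one_mul]

lemma conj_psSymbol (h2 : (2 : ZMod d) * 2⁻¹ = 1)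
    (U : Matrix (ZMod d) (ZMod d) ℂ) (m n : ZMod d) :
    (starRingEnd ℂ) (psSymbol d U m n) =
      ∑ j : ZMod d, (starRingEnd ℂ) (U (m - 2⁻¹ * j) (m + 2⁻¹ * j)) * wpow d (-(j * n)) := by
  rw [psSymbol_eq d h2, map_sum]
  refine Finset.sum_congr rfl fun j _ => ?_
  rw [_root_.map_mul, conj_wpow]

lemma dsum_equiv {M : Type*} [AddCommMonoid M] {α : Type*} [Fintype α]
    (e : α × α ≃ α × α) (g : α → α → M) :
    (∑ x : α, ∑ y : α, g x y) = ∑ x : α, ∑ y : α, g (e (x, y)).1 (e (x, y)).2 :=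
  calc (∑ x : α, ∑ y : α, g x y)
      = ∑ p : α × α, g p.1 p.2 := (Fintype.sum_prod_type (fun p : α × α => g p.1 p.2)).symm
    _ = ∑ p : α × α, g (e p).1 (e p).2 := (Equiv.sum_comp e (fun q => g q.1 q.2)).symm
    _ = ∑ x : α, ∑ y : α, g (e (x, y)).1 (e (x, y)).2 := Fintype.sum_prod_type _

def remapE (d : ℕ) [NeZero d] (m : ZMod d) (h2 : (2 : ZMod d) * 2⁻¹ = 1) :
    (ZMod d × ZMod d) ≃ (ZMod d × ZMod d) where
  toFun p := (2⁻¹ * (p.1 + p.2) - m, p.2 - p.1)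
  invFun q := (m + q.1 - 2⁻¹ * q.2, m + q.1 + 2⁻¹ * q.2)
  left_inv p := by
    have ha : m + (2⁻¹ * (p.1 + p.2) - m) - 2⁻¹ * (p.2 - p.1) = p.1 := by
      linear_combination p.1 * h2
    have hb : m + (2⁻¹ * (p.1 + p.2) - m) + 2⁻¹ * (p.2 - p.1) = p.2 := by
      linear_combination p.2 * h2
    show (_, _) = p
    rw [ha, hb]
  right_inv q := by
    have ha : 2⁻¹ * (m + q.1 - 2⁻¹ * q.2 + (m + q.1 + 2⁻¹ * q.2)) - m = q.1 := by
      linear_combination (m + q.1) * h2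
    have hb : m + q.1 + 2⁻¹ * q.2 - (m + q.1 - 2⁻¹ * q.2) = q.2 := by
      linear_combination q.2 * h2
    show (_, _) = q
    rw [ha, hb]

lemma propG_eq (h2 : (2 : ZMod d) * 2⁻¹ = 1)
    (U : Matrix (ZMod d) (ZMod d) ℂ) (μ' μ : ZMod d × ZMod d) :
    propG d U μ' μ = (1 / (d : ℂ)) * ∑ a : ZMod d, ∑ b : ZMod d,
      U a b * (starRingEnd ℂ) (U (2 * μ'.1 - a) (2 * μ.1 - b)) *
        wpow d (2 * (μ.2 * (b - μ.1) - μ'.2 * (a - μ'.1))) := by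
  obtain ⟨m', n'⟩ := μ'
  obtain ⟨m, n⟩ := μ
  simp only
  have hd0 : (d : ℂ) ≠ 0 := Nat.cast_ne_zero.mpr (NeZero.ne d)
  have key : ∀ mt : ZMod d,
      (∑ nt : ZMod d, wpow d (-(2 * (mt * (n' - n) - nt * (m' - m)))) *
        psSymbol d U (m + mt) (n + nt) *
        (starRingEnd ℂ) (psSymbol d U (m' - mt) (n' - nt)))
      = (d : ℂ) * ∑ j : ZMod d,
          U (m + mt - 2⁻¹ * j) (m + mt + 2⁻¹ * j) *
          (starRingEnd ℂ) (U (m' - mt - 2⁻¹ * (2 * (m - m') - j))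
            (m' - mt + 2⁻¹ * (2 * (m - m') - j))) *
          wpow d (-(2 * (mt * (n' - n))) + j * n + (j + 2 * (m' - m)) * n') := by
    intro mt
    have swap : ∀ (f : ZMod d → ZMod d → ZMod d → ℂ),
        (∑ nt : ZMod d, ∑ j' : ZMod d, ∑ j : ZMod d, f nt j' j)
          = ∑ j : ZMod d, ∑ j' : ZMod d, ∑ nt : ZMod d, f nt j' j := by
      intro f
      calc (∑ nt : ZMod d, ∑ j' : ZMod d, ∑ j : ZMod d, f nt j' j)
          = ∑ nt : ZMod d, ∑ j : ZMod d, ∑ j' : ZMod d, f nt j' j :=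
            Finset.sum_congr rfl fun _ _ => Finset.sum_comm
        _ = ∑ j : ZMod d, ∑ nt : ZMod d, ∑ j' : ZMod d, f nt j' j := Finset.sum_comm
        _ = ∑ j : ZMod d, ∑ j' : ZMod d, ∑ nt : ZMod d, f nt j' j :=
            Finset.sum_congr rfl fun _ _ => Finset.sum_comm
    simp only [psSymbol_eq d h2, map_sum, _root_.map_mul, conj_wpow, Finset.mul_sum, Finset.sum_mul]
    rw [swap]
    refine Finset.sum_congr rfl fun j _ => ?_
    have inner : ∀ j' : ZMod d,
        (∑ nt : ZMod d,
          wpow d (-(2 * (mt * (n' - n) - nt * (m' - m)))) *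
            (U (m + mt - 2⁻¹ * j) (m + mt + 2⁻¹ * j) * wpow d (j * (n + nt))) *
            ((starRingEnd ℂ) (U (m' - mt - 2⁻¹ * j') (m' - mt + 2⁻¹ * j')) *
              wpow d (-(j' * (n' - nt)))))
        = U (m + mt - 2⁻¹ * j) (m + mt + 2⁻¹ * j) *
            (starRingEnd ℂ) (U (m' - mt - 2⁻¹ * j') (m' - mt + 2⁻¹ * j')) *
            wpow d (-(2 * (mt * (n' - n))) + j * n - j' * n') *
            (if 2 * (m' - m) + j + j' = 0 then (d : ℂ) else 0) := by
      intro j'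
      rw [← sum_wpow d (2 * (m' - m) + j + j'), Finset.mul_sum]
      refine Finset.sum_congr rfl fun nt _ => ?_
      calc wpow d (-(2 * (mt * (n' - n) - nt * (m' - m)))) *
            (U (m + mt - 2⁻¹ * j) (m + mt + 2⁻¹ * j) * wpow d (j * (n + nt))) *
            ((starRingEnd ℂ) (U (m' - mt - 2⁻¹ * j') (m' - mt + 2⁻¹ * j')) *
              wpow d (-(j' * (n' - nt))))
          = U (m + mt - 2⁻¹ * j) (m + mt + 2⁻¹ * j) *
              (starRingEnd ℂ) (U (m' - mt - 2⁻¹ * j') (m' - mt + 2⁻¹ * j')) *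
              wpow d (-(2 * (mt * (n' - n) - nt * (m' - m))) + (j * (n + nt)) +
                -(j' * (n' - nt))) := by
            rw [wpow_add, wpow_add]; ring
        _ = U (m + mt - 2⁻¹ * j) (m + mt + 2⁻¹ * j) *
              (starRingEnd ℂ) (U (m' - mt - 2⁻¹ * j') (m' - mt + 2⁻¹ * j')) *
              wpow d ((-(2 * (mt * (n' - n))) + j * n - j' * n') +
                (2 * (m' - m) + j + j') * nt) := by
            congr 2
            ring
        _ = U (m + mt - 2⁻¹ * j) (m + mt + 2⁻¹ * j) *
              (starRingEnd ℂ) (U (m' - mt - 2⁻¹ * j') (m' - mt + 2⁻¹ * j')) *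
              wpow d (-(2 * (mt * (n' - n))) + j * n - j' * n') *
              wpow d ((2 * (m' - m) + j + j') * nt) := by
            rw [wpow_add]; ring
    simp only [inner]
    have hcond : ∀ j' : ZMod d,
        (2 * (m' - m) + j + j' = 0) = (j' = 2 * (m - m') - j) :=
      fun j' => propext ⟨fun h => by linear_combination h, fun h => by linear_combination h⟩
    simp only [hcond, mul_ite, mul_zero]
    rw [Finset.sum_ite_eq' Finset.univ (2 * (m - m') - j)]
    simp only [Finset.mem_univ, if_true]
    rw [mul_comm _ ((d : ℂ))]
    congr 3
    ring
  rw [propG]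
  simp only [key]
  rw [← Finset.mul_sum, ← mul_assoc]
  have hdd : 1 / (d : ℂ) ^ 2 * (d : ℂ) = 1 / (d : ℂ) := by
    field_simp
  rw [hdd]
  congr 1
  rw [dsum_equiv (remapE d m h2)]
  refine Finset.sum_congr rfl fun a _ => Finset.sum_congr rfl fun b _ => ?_
  simp only [remapE, Equiv.coe_fn_mk]
  have e1 : m + (2⁻¹ * (a + b) - m) - 2⁻¹ * (b - a) = a := by linear_combination a * h2
  have e2 : m + (2⁻¹ * (a + b) - m) + 2⁻¹ * (b - a) = b := by linear_combination b * h2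
  have e3 : m' - (2⁻¹ * (a + b) - m) - 2⁻¹ * (2 * (m - m') - (b - a)) = 2 * m' - a := by
    linear_combination (m' - m - a) * h2
  have e4 : m' - (2⁻¹ * (a + b) - m) + 2⁻¹ * (2 * (m - m') - (b - a)) = 2 * m - b := by
    linear_combination (m - m' - b) * h2
  rw [e1, e2, e3, e4]
  congr 2
  linear_combination ((n - n') * (a + b)) * h2

lemma parseval (β γ : ZMod d → ℂ) (φ ψ : ZMod d → ZMod d)
    (h : ∀ c b, (φ c - ψ b = 0) = (c = b)) :
    (∑ q : ZMod d, (∑ b : ZMod d, β b * wpow d (q * φ b)) *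
        (∑ c : ZMod d, γ c * wpow d (-(q * ψ c))))
      = (d : ℂ) * ∑ b : ZMod d, β b * γ b := by
  have swap : ∀ (f : ZMod d → ZMod d → ZMod d → ℂ),
      (∑ q : ZMod d, ∑ b : ZMod d, ∑ c : ZMod d, f q b c)
        = ∑ b : ZMod d, ∑ c : ZMod d, ∑ q : ZMod d, f q b c := by
    intro f
    rw [Finset.sum_comm]
    exact Finset.sum_congr rfl fun _ _ => Finset.sum_comm
  simp only [Finset.sum_mul, Finset.mul_sum]
  rw [swap]
  refine Finset.sum_congr rfl fun b _ => ?_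
  have inner : ∀ c : ZMod d,
      (∑ q : ZMod d, β c * wpow d (q * φ c) * (γ b * wpow d (-(q * ψ b))))
        = β c * γ b * (if φ c - ψ b = 0 then (d : ℂ) else 0) := by
    intro c
    rw [← sum_wpow d (φ c - ψ b), Finset.mul_sum]
    refine Finset.sum_congr rfl fun q _ => ?_
    rw [show (φ c - ψ b) * q = q * φ c + -(q * ψ b) by ring, wpow_add]
    ring
  simp only [inner, h, mul_ite, mul_zero]
  rw [Finset.sum_ite_eq' Finset.univ b (fun c => β c * γ b * (d : ℂ))]
  simp only [Finset.mem_univ, if_true]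
  ring

theorem propagator_composition
    (d : ℕ) [NeZero d] (hd : Nat.Prime d) (hodd : Odd d)
    (U₁ U₂ : Matrix (ZMod d) (ZMod d) ℂ)
    (hU₁ : U₁ ∈ Matrix.unitaryGroup (ZMod d) ℂ)
    (hU₂ : U₂ ∈ Matrix.unitaryGroup (ZMod d) ℂ)
    (μ μ'' : ZMod d × ZMod d) :
    propG d (U₂ * U₁) μ μ'' =
      ∑ μ' : ZMod d × ZMod d, propG d U₂ μ μ' * propG d U₁ μ' μ'' := by
  haveI := Fact.mk hd
  have hd0 : (d : ℂ) ≠ 0 := Nat.cast_ne_zero.mpr (NeZero.ne d)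
  have h2ne : (2 : ZMod d) ≠ 0 := by
    intro h
    have hdvd : d ∣ 2 := by
      rwa [show ((2 : ZMod d)) = ((2 : ℕ) : ZMod d) by norm_cast,
        ZMod.natCast_eq_zero_iff] at h
    rcases (Nat.dvd_prime Nat.prime_two).mp hdvd with h1 | h1
    · exact hd.one_lt.ne' h1
    · rw [h1] at hodd; exact (by decide : ¬ Odd 2) hodd
  have h2 : (2 : ZMod d) * 2⁻¹ = 1 := mul_inv_cancel₀ h2ne
  obtain ⟨m, n⟩ := μ
  obtain ⟨m'', n''⟩ := μ''
  simp only [propG_eq d h2]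
  rw [Fintype.sum_prod_type]
  have key2 : ∀ p : ZMod d,
      (∑ q : ZMod d,
        ((1 / (d : ℂ)) * ∑ a : ZMod d, ∑ b : ZMod d,
            U₂ a b * (starRingEnd ℂ) (U₂ (2 * m - a) (2 * p - b)) *
              wpow d (2 * (q * (b - p) - n * (a - m)))) *
        ((1 / (d : ℂ)) * ∑ c : ZMod d, ∑ e : ZMod d,
            U₁ c e * (starRingEnd ℂ) (U₁ (2 * p - c) (2 * m'' - e)) *
              wpow d (2 * (n'' * (e - m'') - q * (c - p)))))
      = (1 / (d : ℂ)) * ∑ b : ZMod d,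
          (∑ a : ZMod d, U₂ a b * (starRingEnd ℂ) (U₂ (2 * m - a) (2 * p - b)) *
              wpow d (-(2 * (n * (a - m))))) *
          (∑ e : ZMod d, U₁ b e * (starRingEnd ℂ) (U₁ (2 * p - b) (2 * m'' - e)) *
              wpow d (2 * (n'' * (e - m'')))) := by
    intro p
    have hG2 : ∀ q : ZMod d,
        (∑ a : ZMod d, ∑ b : ZMod d,
            U₂ a b * (starRingEnd ℂ) (U₂ (2 * m - a) (2 * p - b)) *
              wpow d (2 * (q * (b - p) - n * (a - m))))
        = ∑ b : ZMod d,
            (∑ a : ZMod d, U₂ a b * (starRingEnd ℂ) (U₂ (2 * m - a) (2 * p - b)) *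
              wpow d (-(2 * (n * (a - m))))) * wpow d (q * (2 * (b - p))) := by
      intro q
      rw [Finset.sum_comm]
      refine Finset.sum_congr rfl fun b _ => ?_
      rw [Finset.sum_mul]
      refine Finset.sum_congr rfl fun a _ => ?_
      rw [show (2 * (q * (b - p) - n * (a - m)))
          = -(2 * (n * (a - m))) + q * (2 * (b - p)) by ring, wpow_add]
      ring
    have hG1 : ∀ q : ZMod d,
        (∑ c : ZMod d, ∑ e : ZMod d,
            U₁ c e * (starRingEnd ℂ) (U₁ (2 * p - c) (2 * m'' - e)) *
              wpow d (2 * (n'' * (e - m'') - q * (c - p))))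
        = ∑ c : ZMod d,
            (∑ e : ZMod d, U₁ c e * (starRingEnd ℂ) (U₁ (2 * p - c) (2 * m'' - e)) *
              wpow d (2 * (n'' * (e - m'')))) * wpow d (-(q * (2 * (c - p)))) := by
      intro q
      refine Finset.sum_congr rfl fun c _ => ?_
      rw [Finset.sum_mul]
      refine Finset.sum_congr rfl fun e _ => ?_
      rw [show (2 * (n'' * (e - m'') - q * (c - p)))
          = 2 * (n'' * (e - m'')) + -(q * (2 * (c - p))) by ring, wpow_add]
      ring
    simp only [hG2, hG1]
    have hfac : ∀ X Y : ℂ,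
        ((1 / (d : ℂ)) * X) * ((1 / (d : ℂ)) * Y) = (1 / (d : ℂ) ^ 2) * (X * Y) := by
      intro X Y; ring
    simp only [hfac]
    rw [← Finset.mul_sum]
    have hcond : ∀ c b : ZMod d, (2 * (c - p) - 2 * (b - p) = 0) = (c = b) := by
      intro c b
      refine propext ⟨fun h => ?_, fun h => by rw [h]; ring⟩
      have h' : 2 * (c - b) = 0 := by linear_combination h
      rcases mul_eq_zero.mp h' with h'' | h''
      · exact absurd h'' h2ne
      · exact sub_eq_zero.mp h''
    rw [parseval d _ _ (fun b => 2 * (b - p)) (fun c => 2 * (c - p)) hcond]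
    rw [← mul_assoc]
    congr 1
    field_simp
  simp only [key2]
  rw [← Finset.mul_sum]
  congr 1
  symm
  simp only [Finset.sum_mul, Finset.mul_sum]
  have swap4 : ∀ (f : ZMod d → ZMod d → ZMod d → ZMod d → ℂ),
      (∑ p : ZMod d, ∑ b : ZMod d, ∑ a : ZMod d, ∑ e : ZMod d, f p b a e)
        = ∑ e : ZMod d, ∑ a : ZMod d, ∑ b : ZMod d, ∑ p : ZMod d, f p b a e := by
    intro f
    calc (∑ p : ZMod d, ∑ b : ZMod d, ∑ a : ZMod d, ∑ e : ZMod d, f p b a e)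
        = ∑ p : ZMod d, ∑ b : ZMod d, ∑ e : ZMod d, ∑ a : ZMod d, f p b a e :=
          Finset.sum_congr rfl fun _ _ => Finset.sum_congr rfl fun _ _ => Finset.sum_comm
      _ = ∑ p : ZMod d, ∑ e : ZMod d, ∑ b : ZMod d, ∑ a : ZMod d, f p b a e :=
          Finset.sum_congr rfl fun _ _ => Finset.sum_comm
      _ = ∑ e : ZMod d, ∑ p : ZMod d, ∑ b : ZMod d, ∑ a : ZMod d, f p b a e :=
          Finset.sum_comm
      _ = ∑ e : ZMod d, ∑ p : ZMod d, ∑ a : ZMod d, ∑ b : ZMod d, f p b a e :=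
          Finset.sum_congr rfl fun _ _ => Finset.sum_congr rfl fun _ _ => Finset.sum_comm
      _ = ∑ e : ZMod d, ∑ a : ZMod d, ∑ p : ZMod d, ∑ b : ZMod d, f p b a e :=
          Finset.sum_congr rfl fun _ _ => Finset.sum_comm
      _ = ∑ e : ZMod d, ∑ a : ZMod d, ∑ b : ZMod d, ∑ p : ZMod d, f p b a e :=
          Finset.sum_congr rfl fun _ _ => Finset.sum_congr rfl fun _ _ => Finset.sum_comm
  rw [swap4]
  refine Finset.sum_congr rfl fun a _ => Finset.sum_congr rfl fun e _ => ?_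
  have hp : ∀ b : ZMod d,
      (∑ p : ZMod d, (starRingEnd ℂ) (U₂ (2 * m - a) (2 * p - b)) *
        (starRingEnd ℂ) (U₁ (2 * p - b) (2 * m'' - e)))
      = (starRingEnd ℂ) ((U₂ * U₁) (2 * m - a) (2 * m'' - e)) := by
    intro b
    have hsum := Equiv.sum_comp
      (⟨fun p => 2 * p - b, fun r => 2⁻¹ * (r + b),
        fun p => by simp only; linear_combination p * h2,
        fun r => by simp only; linear_combination (r + b) * h2⟩ : ZMod d ≃ ZMod d)
      (fun r => (starRingEnd ℂ) (U₂ (2 * m - a) r) * (starRingEnd ℂ) (U₁ r (2 * m'' - e)))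
    rw [Equiv.coe_fn_mk] at hsum
    rw [hsum, Matrix.mul_apply, map_sum]
    exact Finset.sum_congr rfl fun r _ => (map_mul (starRingEnd ℂ) _ _).symm
  calc (∑ b : ZMod d, ∑ p : ZMod d,
        U₂ a b * (starRingEnd ℂ) (U₂ (2 * m - a) (2 * p - b)) * wpow d (-(2 * (n * (a - m)))) *
          (U₁ b e * (starRingEnd ℂ) (U₁ (2 * p - b) (2 * m'' - e)) *
            wpow d (2 * (n'' * (e - m'')))))
      = ∑ b : ZMod d,
          (U₂ a b * U₁ b e * (wpow d (-(2 * (n * (a - m)))) * wpow d (2 * (n'' * (e - m''))))) *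
          (∑ p : ZMod d, (starRingEnd ℂ) (U₂ (2 * m - a) (2 * p - b)) *
            (starRingEnd ℂ) (U₁ (2 * p - b) (2 * m'' - e))) := by
        refine Finset.sum_congr rfl fun b _ => ?_
        rw [Finset.mul_sum]
        exact Finset.sum_congr rfl fun p _ => by ring
    _ = (∑ b : ZMod d, U₂ a b * U₁ b e) *
          ((wpow d (-(2 * (n * (a - m)))) * wpow d (2 * (n'' * (e - m'')))) *
            (starRingEnd ℂ) ((U₂ * U₁) (2 * m - a) (2 * m'' - e))) := by
        simp only [hp]
        rw [Finset.sum_mul]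
        exact Finset.sum_congr rfl fun b _ => by ring
    _ = (U₂ * U₁) a e * (starRingEnd ℂ) ((U₂ * U₁) (2 * m - a) (2 * m'' - e)) *
          wpow d (2 * (n'' * (e - m'') - n * (a - m))) := by
        rw [← Matrix.mul_apply, ← wpow_add,
          show -(2 * (n * (a - m))) + 2 * (n'' * (e - m'')) =
            2 * (n'' * (e - m'') - n * (a - m)) by ring]
        ring
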